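/- Define, for complex numbers b₁, b₂ with b₁ ≠ b₂, a complex number X with |X| small, and an integer n ≥ 0: I(n) = q^{-(3s+1/2)n}/(b₁−b₂) · [ (b₁^{n+1} − b₂^{n+1}) + (1−q⁻¹)·(b₁b₂X)/((1−b₁X)(1−b₂X)) · (b₁ⁿ − b₂ⁿ − b₁^{n+1}X + b₂^{n+1}X + b₁X(b₁b₂X)ⁿ − b₂X(b₁b₂X)ⁿ) ], where X = q^{-(3s−3/2)}. Then with c(l) := q^{−3sl−l/2}(b₁^{l+1} − b₂^{l+1})/(b₁−b₂) for l ≥ 0 and c(l) := 0 for l < 0, the identity I(n) = c(n) + Σ_{m=1}^{∞} (1−q⁻¹) q^{(−6s+1)m}(b₁b₂)^m c(n−m) holds (the sum is finite since c(n−m)=0 for m > n). -/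

import Mathlib

open Complex

/-- The closed-form expression
`I(n) = q^{-(3s+1/2)n}/(b₁−b₂) · [(b₁^{n+1} − b₂^{n+1})
  + (1−q⁻¹)(b₁b₂X)/((1−b₁X)(1−b₂X)) · (b₁ⁿ − b₂ⁿ − b₁^{n+1}X + b₂^{n+1}X
      + b₁X(b₁b₂X)ⁿ − b₂X(b₁b₂X)ⁿ)]`, where `X = q^{−(3s−3/2)}`. -/
noncomputable def Icf (q : ℝ) (s b₁ b₂ : ℂ) (n : ℕ) : ℂ :=
  (q : ℂ) ^ (-(3 * s + 1 / 2) * n) / (b₁ - b₂) *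
    ((b₁ ^ (n + 1) - b₂ ^ (n + 1)) +
      (1 - (q : ℂ)⁻¹) * (b₁ * b₂ * (q : ℂ) ^ (-(3 * s - 3 / 2))) /
          ((1 - b₁ * (q : ℂ) ^ (-(3 * s - 3 / 2))) *
            (1 - b₂ * (q : ℂ) ^ (-(3 * s - 3 / 2)))) *
        (b₁ ^ n - b₂ ^ n - b₁ ^ (n + 1) * (q : ℂ) ^ (-(3 * s - 3 / 2)) +
          b₂ ^ (n + 1) * (q : ℂ) ^ (-(3 * s - 3 / 2)) +
          b₁ * (q : ℂ) ^ (-(3 * s - 3 / 2)) *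
            (b₁ * b₂ * (q : ℂ) ^ (-(3 * s - 3 / 2))) ^ n -
          b₂ * (q : ℂ) ^ (-(3 * s - 3 / 2)) *
            (b₁ * b₂ * (q : ℂ) ^ (-(3 * s - 3 / 2))) ^ n))

/-- `c(l) = q^{−3sl−l/2}(b₁^{l+1} − b₂^{l+1})/(b₁−b₂)` for `l ≥ 0`, `c(l) = 0`
for `l < 0`. -/
noncomputable def ccf (q : ℝ) (s b₁ b₂ : ℂ) (l : ℤ) : ℂ :=
  if 0 ≤ l then
    (q : ℂ) ^ (-(3 * s) * l - l / 2) * (b₁ ^ (l + 1) - b₂ ^ (l + 1)) / (b₁ - b₂)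
  else 0

/-! Put `r = q^{-(3s+1/2)}` and `X = q^{-(3s-3/2)}`. Then `c(l) = r^l (b₁^{l+1} - b₂^{l+1})/(b₁ - b₂)`
and `q^{(-6s+1)m} = (rX)^m`, so after factoring out `r^n` the right-hand side is
`Σ_{m=1}^{n} (b₁b₂X)^m (b₁^{n+1-m} - b₂^{n+1-m})`, a difference of two finite geometric series
in `b₂X` and `b₁X`; summing them gives the closed form. -/

open Finset

section Algebra

variable {R : Type*} [CommRing R]

lemma mul_pow_succ_mul_pow_sub (x y : R) {m n : ℕ} (h : m ≤ n) :
    (x * y) ^ (m + 1) * x ^ (n - m) = x ^ (n + 1) * y ^ (m + 1) := by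
  rw [mul_pow, mul_right_comm, ← pow_add, show m + 1 + (n - m) = n + 1 by omega]

lemma one_sub_mul_sum_range_mul_pow_succ_mul_pow_sub (x y : R) (n : ℕ) :
    (1 - y) * ∑ m ∈ range n, (x * y) ^ (m + 1) * x ^ (n - m) = x ^ (n + 1) * y * (1 - y ^ n) := by
  rw [sum_congr rfl fun m hm => mul_pow_succ_mul_pow_sub x y (mem_range.1 hm).le,
    ← mul_sum, ← mul_neg_geom_sum y n]
  simp only [pow_succ, ← sum_mul]
  ring

lemma mul_sum_range_pow_succ_mul_sub_pow (a b u : R) (n : ℕ) :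
    (1 - a * u) * (1 - b * u) * ∑ m ∈ range n, (a * b * u) ^ (m + 1) * (a ^ (n - m) - b ^ (n - m)) =
      a * b * u * (a ^ n - b ^ n - a ^ (n + 1) * u + b ^ (n + 1) * u +
        a * u * (a * b * u) ^ n - b * u * (a * b * u) ^ n) := by
  have ha := one_sub_mul_sum_range_mul_pow_succ_mul_pow_sub a (b * u) n
  have hb := one_sub_mul_sum_range_mul_pow_succ_mul_pow_sub b (a * u) n
  rw [← mul_assoc] at ha
  rw [show b * (a * u) = a * b * u by ring] at hb
  simp only [mul_sub, sum_sub_distrib]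
  linear_combination (1 - a * u) * ha - (1 - b * u) * hb

end Algebra

lemma div_mul_add_eq_add_sum_range {K : Type*} [Field K] {a b u : K} (hab : a ≠ b)
    (ha : 1 - a * u ≠ 0) (hb : 1 - b * u ≠ 0) (r t : K) (n : ℕ) :
    r ^ n / (a - b) * ((a ^ (n + 1) - b ^ (n + 1)) +
      (1 - t) * (a * b * u) / ((1 - a * u) * (1 - b * u)) *
        (a ^ n - b ^ n - a ^ (n + 1) * u + b ^ (n + 1) * u +
          a * u * (a * b * u) ^ n - b * u * (a * b * u) ^ n)) =
      r ^ n * (a ^ (n + 1) - b ^ (n + 1)) / (a - b) +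
        ∑ m ∈ range n, (1 - t) * (r * u) ^ (m + 1) * (a * b) ^ (m + 1) *
          (r ^ (n - (m + 1)) * (a ^ (n - (m + 1) + 1) - b ^ (n - (m + 1) + 1)) / (a - b)) := by
  have hterm : ∀ m ∈ range n, (1 - t) * (r * u) ^ (m + 1) * (a * b) ^ (m + 1) *
      (r ^ (n - (m + 1)) * (a ^ (n - (m + 1) + 1) - b ^ (n - (m + 1) + 1)) / (a - b)) =
      (1 - t) * r ^ n / (a - b) * ((a * b * u) ^ (m + 1) * (a ^ (n - m) - b ^ (n - m))) := by
    intro m hm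
    obtain ⟨k, rfl⟩ := Nat.exists_eq_add_of_lt (mem_range.1 hm)
    rw [show m + k + 1 - (m + 1) = k by omega, show m + k + 1 - m = k + 1 by omega]
    ring
  have hsum : ∑ m ∈ range n, (a * b * u) ^ (m + 1) * (a ^ (n - m) - b ^ (n - m)) =
      a * b * u * (a ^ n - b ^ n - a ^ (n + 1) * u + b ^ (n + 1) * u +
        a * u * (a * b * u) ^ n - b * u * (a * b * u) ^ n) / ((1 - a * u) * (1 - b * u)) := by
    rw [eq_div_iff (mul_ne_zero ha hb), mul_comm]
    exact mul_sum_range_pow_succ_mul_sub_pow a b u n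
  rw [sum_congr rfl hterm, ← mul_sum, hsum]
  have := sub_ne_zero.2 hab
  field_simp

section Whittaker

variable {q : ℝ} (s b₁ b₂ : ℂ)

lemma ccf_natCast (k : ℕ) :
    ccf q s b₁ b₂ k = ((q : ℂ) ^ (-(3 * s + 1 / 2))) ^ k * (b₁ ^ (k + 1) - b₂ ^ (k + 1)) / (b₁ - b₂) := by
  rw [ccf, if_pos k.cast_nonneg, ← Nat.cast_succ, zpow_natCast, zpow_natCast, ← cpow_nat_mul,
    show -(3 * s) * ((k : ℤ) : ℂ) - ((k : ℤ) : ℂ) / 2 = k * -(3 * s + 1 / 2) by push_cast; ring]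

lemma ccf_of_neg {l : ℤ} (hl : l < 0) : ccf q s b₁ b₂ l = 0 :=
  if_neg hl.not_ge

lemma cpow_neg_six_mul_add_one (hq : (q : ℂ) ≠ 0) (m : ℕ) :
    (q : ℂ) ^ ((-6 * s + 1) * ((m : ℂ) + 1)) =
      ((q : ℂ) ^ (-(3 * s + 1 / 2)) * (q : ℂ) ^ (-(3 * s - 3 / 2))) ^ (m + 1) := by
  rw [← cpow_add _ _ hq, ← cpow_nat_mul]
  push_cast
  ring_nf

end Whittaker

/-- The identity `I(n) = c(n) + Σ_{m≥1} (1−q⁻¹) q^{(−6s+1)m}(b₁b₂)^m c(n−m)`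
(the sum is finite since `c(n−m) = 0` for `m > n`). -/
theorem stmt11 (q : ℝ) (hq : 1 < q) (s b₁ b₂ : ℂ) (hb : b₁ ≠ b₂)
    (h1 : 1 - b₁ * (q : ℂ) ^ (-(3 * s - 3 / 2)) ≠ 0)
    (h2 : 1 - b₂ * (q : ℂ) ^ (-(3 * s - 3 / 2)) ≠ 0)
    (n : ℕ) :
    Icf q s b₁ b₂ n =
      ccf q s b₁ b₂ n +
        ∑' m : ℕ,
          (1 - (q : ℂ)⁻¹) * (q : ℂ) ^ ((-6 * s + 1) * ((m : ℂ) + 1)) *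
            (b₁ * b₂) ^ (m + 1) * ccf q s b₁ b₂ ((n : ℤ) - ((m : ℤ) + 1)) := by
  have hq0 : (q : ℂ) ≠ 0 := ofReal_ne_zero.2 (by linarith)
  rw [tsum_eq_sum (s := range n) fun m hm => by
    rw [ccf_of_neg _ _ _ (by rw [mem_range, not_lt] at hm; omega), mul_zero]]
  rw [sum_congr rfl fun m hm => by
    rw [show (n : ℤ) - ((m : ℤ) + 1) = ((n - (m + 1) : ℕ) : ℤ) by rw [mem_range] at hm; omega,
      ccf_natCast, cpow_neg_six_mul_add_one s hq0]]
  rw [Icf, ccf_natCast, mul_comm (-(3 * s + 1 / 2)), cpow_nat_mul]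
  exact div_mul_add_eq_add_sum_range hb h1 h2 _ _ n
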